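/- arXiv:2106.10100 — 2 statements merged into one kernel-verified Lean document; each statement's English description precedes it below -/
import Mathlib

section
/- (Whitman's condition, admissibility form.) For all lattice terms s_1, s_2, t_1, t_2 over a variable type α: if ⊨_Lat s_1 ⊓ s_2 ≤ t_1 ⊔ t_2, then ⊨_Lat s_1 ≤ t_1 ⊔ t_2, or ⊨_Lat s_2 ≤ t_1 ⊔ t_2, or ⊨_Lat s_1 ⊓ s_2 ≤ t_1, or ⊨_Lat s_1 ⊓ s_2 ≤ t_2. -/
/-- Lattice terms over variable type `α`: first-order terms in the language with exactly
two binary function symbols (meet and join). -/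
inductive LatTerm (α : Type) : Type
  | var : α → LatTerm α
  | meet : LatTerm α → LatTerm α → LatTerm α
  | join : LatTerm α → LatTerm α → LatTerm α

namespace LatTerm

/-- Realization of a lattice term in a lattice `M` under a valuation `v`. -/
def realize {α M : Type} [Lattice M] (v : α → M) : LatTerm α → M
  | var a => v a
  | meet s t => realize v s ⊓ realize v t
  | join s t => realize v s ⊔ realize v t

/-- Simultaneous substitution of lattice terms for variables. -/
def subst {α β : Type} (σ : α → LatTerm β) : LatTerm α → LatTerm β
  | var a => σ a
  | meet s t => meet (subst σ s) (subst σ t)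
  | join s t => join (subst σ s) (subst σ t)

end LatTerm

/-- A lattice equation: a pair of lattice terms. -/
abbrev LatEq (α : Type) : Type := LatTerm α × LatTerm α

/-- The inequation `s ≤ t`, as the equation `s ⊓ t ≈ s`. -/
def leEq {α : Type} (s t : LatTerm α) : LatEq α := (s.meet t, s)

/-- Lat-validity: the two terms have equal realizations in every lattice under
every valuation. -/
def LatValid {α : Type} (e : LatEq α) : Prop :=
  ∀ (M : Type) [Lattice M] (v : α → M), e.1.realize v = e.2.realize v

/-- The join, with a fixed bracketing, of `f 0, …, f m`. -/
def finJoin {α : Type} : {m : ℕ} → (Fin (m + 1) → LatTerm α) → LatTerm α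
  | 0, f => f 0
  | _ + 1, f => LatTerm.join (finJoin fun k => f k.castSucc) (f (Fin.last _))

/-- The meet, with a fixed bracketing, of `f 0, …, f m`. -/
def finMeet {α : Type} : {m : ℕ} → (Fin (m + 1) → LatTerm α) → LatTerm α
  | 0, f => f 0
  | _ + 1, f => LatTerm.meet (finMeet fun k => f k.castSucc) (f (Fin.last _))

/-! Suppose all four inequations fail. A product of the four refuting lattices refutes all of
them under a single valuation `v`; put `a = (s₁ ⊓ s₂)(v)` and `b = (t₁ ⊔ t₂)(v)`. Double the
interval `[a, b]` (Alan Day's construction) and lift `v` to the lower copy. Because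
`sᵢ(v) ≰ b`, the realizations of `s₁, s₂` lie in the upper copy, so their meet is the upper
copy of `a`; because `a ≰ tⱼ(v)`, the realizations of `t₁, t₂` lie in the lower copy, so their
join is the lower copy of `b`. The upper `a` is not below the lower `b`, so
`s₁ ⊓ s₂ ≤ t₁ ⊔ t₂` fails in the doubled lattice. -/

section

variable {M : Type*} [Lattice M]

/-- Day's doubling of the interval `[a, b]`: an element `x ∉ [a, b]` of `M` survives only as
`(x, False)` if `x ≤ b` and as `(x, True)` otherwise, while each `x ∈ [a, b]` appears twice. -/
def IntervalDoubling (a b : M) : Type _ :=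
  {p : M × Prop // (¬ p.1 ≤ b → p.2) ∧ (p.2 → p.1 ≤ b → a ≤ p.1)}

namespace IntervalDoubling

variable {a b : M}

noncomputable instance : Lattice (IntervalDoubling a b) where
  __ := Subtype.semilatticeSup fun p q hp hq => by
    refine ⟨fun h => ?_, ?_⟩
    · by_contra hpq
      exact h (sup_le (not_not.1 fun hx => hpq (Or.inl (hp.1 hx)))
        (not_not.1 fun hy => hpq (Or.inr (hq.1 hy))))
    · rintro (h | h) hle
      · exact le_sup_of_le_left (hp.2 h (le_sup_left.trans hle))
      · exact le_sup_of_le_right (hq.2 h (le_sup_right.trans hle))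
  inf p q := ⟨(p.1.1 ⊓ q.1.1, p.1.2 ∧ q.1.2 ∧ (p.1.1 ⊓ q.1.1 ≤ b → a ≤ p.1.1 ⊓ q.1.1)),
    fun h => ⟨p.2.1 fun hp => h (inf_le_of_left_le hp),
      q.2.1 fun hq => h (inf_le_of_right_le hq), fun h' => absurd h' h⟩,
    fun h => h.2.2⟩
  inf_le_left _ _ := Prod.le_def.2 ⟨inf_le_left, fun h => h.1⟩
  inf_le_right _ _ := Prod.le_def.2 ⟨inf_le_right, fun h => h.2.1⟩
  le_inf r p q hp hq := by
    obtain ⟨hxp, hfp⟩ := Prod.le_def.1 hp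
    obtain ⟨hxq, hfq⟩ := Prod.le_def.1 hq
    exact Prod.le_def.2 ⟨le_inf hxp hxq, fun h => ⟨hfp h, hfq h,
      fun hb => (r.2.2 h ((le_inf hxp hxq).trans hb)).trans (le_inf hxp hxq)⟩⟩

def fst : LatticeHom (IntervalDoubling a b) M where
  toFun p := p.1.1
  map_sup' _ _ := rfl
  map_inf' _ _ := rfl

def lift (x : M) : IntervalDoubling a b :=
  ⟨(x, ¬ x ≤ b), ⟨id, fun h hx => absurd hx h⟩⟩

theorem not_inf_le_sup {p₁ p₂ q₁ q₂ : IntervalDoubling a b}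
    (ha : fst p₁ ⊓ fst p₂ = a) (hb : fst q₁ ⊔ fst q₂ = b)
    (hp₁ : ¬ fst p₁ ≤ b) (hp₂ : ¬ fst p₂ ≤ b) (hq₁ : ¬ a ≤ fst q₁) (hq₂ : ¬ a ≤ fst q₂) :
    ¬ p₁ ⊓ p₂ ≤ q₁ ⊔ q₂ := by
  intro hle
  have hflag : p₁.1.2 ∧ p₂.1.2 ∧ (fst p₁ ⊓ fst p₂ ≤ b → a ≤ fst p₁ ⊓ fst p₂) :=
    ⟨p₁.2.1 hp₁, p₂.2.1 hp₂, fun _ => ha.ge⟩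
  rcases (Prod.le_def.1 hle).2 hflag with hq | hq
  · exact hq₁ (q₁.2.2 hq (le_sup_left.trans_eq hb))
  · exact hq₂ (q₂.2.2 hq (le_sup_right.trans_eq hb))

end IntervalDoubling

end

namespace LatTerm

variable {α M N : Type} [Lattice M] [Lattice N]

theorem map_realize (f : LatticeHom M N) (v : α → M) (t : LatTerm α) :
    f (t.realize v) = t.realize (f ∘ v) := by
  induction t with
  | var a => rfl
  | meet s t ihs iht => simp only [realize, map_inf, ihs, iht]
  | join s t ihs iht => simp only [realize, map_sup, ihs, iht]

theorem realize_comp_le_realize_comp (f : LatticeHom M N) {v : α → M} {s t : LatTerm α}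
    (h : s.realize v ≤ t.realize v) : s.realize (f ∘ v) ≤ t.realize (f ∘ v) := by
  simpa only [map_realize] using OrderHomClass.mono f h

theorem fst_realize_lift_comp (v : α → M) {a b : M} (t : LatTerm α) :
    IntervalDoubling.fst (t.realize (IntervalDoubling.lift (a := a) (b := b) ∘ v)) =
      t.realize v := by
  rw [map_realize]; rfl

theorem not_realize_meet_le_realize_join_lift {s₁ s₂ t₁ t₂ : LatTerm α} {v : α → M}
    (h₁ : ¬ s₁.realize v ≤ (t₁.join t₂).realize v) (h₂ : ¬ s₂.realize v ≤ (t₁.join t₂).realize v)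
    (h₃ : ¬ (s₁.meet s₂).realize v ≤ t₁.realize v) (h₄ : ¬ (s₁.meet s₂).realize v ≤ t₂.realize v) :
    let w : α → IntervalDoubling ((s₁.meet s₂).realize v) ((t₁.join t₂).realize v) :=
      IntervalDoubling.lift ∘ v
    ¬ (s₁.meet s₂).realize w ≤ (t₁.join t₂).realize w :=
  IntervalDoubling.not_inf_le_sup
    (by simp only [fst_realize_lift_comp]; rfl) (by simp only [fst_realize_lift_comp]; rfl)
    (by rwa [fst_realize_lift_comp]) (by rwa [fst_realize_lift_comp])
    (by rwa [fst_realize_lift_comp]) (by rwa [fst_realize_lift_comp])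

end LatTerm

theorem latValid_leEq_iff {α : Type} (s t : LatTerm α) :
    LatValid (leEq s t) ↔ ∀ (M : Type) [Lattice M] (v : α → M), s.realize v ≤ t.realize v := by
  simp only [LatValid, leEq, LatTerm.realize, inf_eq_left]

theorem stmt7 {α : Type} (s₁ s₂ t₁ t₂ : LatTerm α)
    (h : LatValid (leEq (s₁.meet s₂) (t₁.join t₂))) :
    LatValid (leEq s₁ (t₁.join t₂)) ∨ LatValid (leEq s₂ (t₁.join t₂)) ∨
      LatValid (leEq (s₁.meet s₂) t₁) ∨ LatValid (leEq (s₁.meet s₂) t₂) := by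
  simp only [latValid_leEq_iff] at h ⊢
  by_contra! hc
  obtain ⟨⟨M₁, _, v₁, h₁⟩, ⟨M₂, _, v₂, h₂⟩, ⟨M₃, _, v₃, h₃⟩, ⟨M₄, _, v₄, h₄⟩⟩ := hc
  let v : α → (M₁ × M₂) × (M₃ × M₄) := fun x => ((v₁ x, v₂ x), (v₃ x, v₄ x))
  refine LatTerm.not_realize_meet_le_realize_join_lift (v := v) ?_ ?_ ?_ ?_ (h _ _)
  · exact fun hle => h₁ (LatTerm.realize_comp_le_realize_comp (.comp .fst .fst) hle)
  · exact fun hle => h₂ (LatTerm.realize_comp_le_realize_comp (.comp .snd .fst) hle)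
  · exact fun hle => h₃ (LatTerm.realize_comp_le_realize_comp (.comp .fst .snd) hle)
  · exact fun hle => h₄ (LatTerm.realize_comp_le_realize_comp (.comp .snd .snd) hle)
end

section
/- For every n ≥ 2, the set Δ_n^{DL} := { ⊓_{i ∈ I} y_i ≤ ⊔_{j ∈ Fin n \ I} y_j : I a nonempty proper subset of Fin n } is DLat-refuting for the variables of Fin n: for every lattice equation ε over Fin n, ε fails to be DLat-valid if and only if {ε} ⊢~_DLat Δ_n^{DL}. -/
/-- DLat-validity: equal realizations in every distributive lattice under every valuation. -/
def DLatValid {α : Type} (e : LatEq α) : Prop :=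
  ∀ (M : Type) [DistribLattice M] (v : α → M), e.1.realize v = e.2.realize v

/-- `Γ ⊢~_DLat Δ`. -/
def DLatAdm {n : ℕ} (Γ Δ : Set (LatEq (Fin n))) : Prop :=
  ∀ σ : Fin n → LatTerm ℕ,
    (∀ e ∈ Γ, DLatValid (e.1.subst σ, e.2.subst σ)) →
      ∃ d ∈ Δ, DLatValid (d.1.subst σ, d.2.subst σ)

/-- `Δ` is DLat-refuting for the variables of `Fin n`. -/
def DLatRefuting {n : ℕ} (Δ : Set (LatEq (Fin n))) : Prop :=
  ∀ e : LatEq (Fin n), ¬ DLatValid e ↔ DLatAdm {e} Δ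

/-- The join, with a fixed bracketing, of a nonempty list of lattice terms. -/
def joinListNE {α : Type} : (l : List (LatTerm α)) → l ≠ [] → LatTerm α
  | [], h => absurd rfl h
  | a :: l, _ => l.foldl LatTerm.join a

/-- The meet, with a fixed bracketing, of a nonempty list of lattice terms. -/
def meetListNE {α : Type} : (l : List (LatTerm α)) → l ≠ [] → LatTerm α
  | [], h => absurd rfl h
  | a :: l, _ => l.foldl LatTerm.meet a

/-- The join, with a fixed bracketing and order, of `f i` for `i` in a nonempty finset `s`. -/
noncomputable def finsetJoin {γ α : Type} (s : Finset γ) (hs : s.Nonempty)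
    (f : γ → LatTerm α) : LatTerm α :=
  joinListNE (s.toList.map f)
    (by simp only [ne_eq, List.map_eq_nil_iff, Finset.toList_eq_nil]; exact hs.ne_empty)

/-- The meet, with a fixed bracketing and order, of `f i` for `i` in a nonempty finset `s`. -/
noncomputable def finsetMeet {γ α : Type} (s : Finset γ) (hs : s.Nonempty)
    (f : γ → LatTerm α) : LatTerm α :=
  meetListNE (s.toList.map f)
    (by simp only [ne_eq, List.map_eq_nil_iff, Finset.toList_eq_nil]; exact hs.ne_empty)

/-- The set `Δ_n^{DL}` (for `n = m + 2`) of equations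
`⊓_{i ∈ I} y_i ≤ ⊔_{j ∈ Fin n \ I} y_j` for `I` a nonempty proper subset of `Fin n`
(properness being recorded by the nonemptiness of the complement of `I`). -/
def DeltaDL (m : ℕ) : Set (LatEq (Fin (m + 2))) :=
  { e | ∃ (I : Finset (Fin (m + 2))) (hI : I.Nonempty) (_ : I ≠ Finset.univ)
          (hc : Iᶜ.Nonempty),
      e = leEq (finsetMeet I hI LatTerm.var) (finsetJoin Iᶜ hc LatTerm.var) }

namespace LatTerm

variable {α β M : Type}

theorem realize_subst [Lattice M] (σ : α → LatTerm β) (v : β → M) :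
    ∀ t : LatTerm α, (t.subst σ).realize v = t.realize fun a => (σ a).realize v
  | var _ => rfl
  | meet s t => congrArg₂ (· ⊓ ·) (realize_subst σ v s) (realize_subst σ v t)
  | join s t => congrArg₂ (· ⊔ ·) (realize_subst σ v s) (realize_subst σ v t)

theorem realize_comp_latticeHom {N : Type} [Lattice M] [Lattice N] (f : LatticeHom M N)
    (v : α → M) : ∀ t : LatTerm α, t.realize (f ∘ v) = f (t.realize v)
  | var _ => rfl
  | meet s t => by
    simp only [realize, realize_comp_latticeHom f v s, realize_comp_latticeHom f v t, map_inf]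
  | join s t => by
    simp only [realize, realize_comp_latticeHom f v s, realize_comp_latticeHom f v t, map_sup]

theorem realize_const [Lattice M] (c : M) : ∀ t : LatTerm α, t.realize (fun _ => c) = c
  | var _ => rfl
  | meet s t => by simp only [realize, realize_const c s, realize_const c t, inf_idem]
  | join s t => by simp only [realize, realize_const c s, realize_const c t, sup_idem]

theorem le_realize_foldl_meet_iff [Lattice M] (v : α → M) (x : M) :
    ∀ (l : List (LatTerm α)) (a : LatTerm α),
      x ≤ (l.foldl meet a).realize v ↔ ∀ t ∈ a :: l, x ≤ t.realize v
  | [], a => by simp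
  | b :: l, a => by
    rw [List.foldl_cons, le_realize_foldl_meet_iff v x l]
    simp [realize, and_assoc]

theorem realize_foldl_join_le_iff [Lattice M] (v : α → M) (x : M) :
    ∀ (l : List (LatTerm α)) (a : LatTerm α),
      (l.foldl join a).realize v ≤ x ↔ ∀ t ∈ a :: l, t.realize v ≤ x
  | [], a => by simp
  | b :: l, a => by
    rw [List.foldl_cons, realize_foldl_join_le_iff v x l]
    simp [realize, and_assoc]

theorem exists_ne_of_realize_ne [Lattice M] {s t : LatTerm α} {v : α → M}
    (h : s.realize v ≠ t.realize v) (c : M) : ∃ a, v a ≠ c := by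
  by_contra! hv
  obtain rfl : v = fun _ => c := funext hv
  simp [realize_const] at h

end LatTerm

section

variable {γ α M : Type} [Lattice M]

theorem le_realize_meetListNE_iff (v : α → M) (x : M) :
    ∀ (l : List (LatTerm α)) (h : l ≠ []),
      x ≤ (meetListNE l h).realize v ↔ ∀ t ∈ l, x ≤ t.realize v
  | a :: l, _ => LatTerm.le_realize_foldl_meet_iff v x l a

theorem realize_joinListNE_le_iff (v : α → M) (x : M) :
    ∀ (l : List (LatTerm α)) (h : l ≠ []),
      (joinListNE l h).realize v ≤ x ↔ ∀ t ∈ l, t.realize v ≤ x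
  | a :: l, _ => LatTerm.realize_foldl_join_le_iff v x l a

theorem realize_finsetMeet (s : Finset γ) (hs : s.Nonempty) (f : γ → LatTerm α)
    (v : α → M) :
    (finsetMeet s hs f).realize v = s.inf' hs fun i => (f i).realize v :=
  eq_of_forall_le_iff fun x => by simp [finsetMeet, le_realize_meetListNE_iff, Finset.le_inf'_iff]

theorem realize_finsetJoin (s : Finset γ) (hs : s.Nonempty) (f : γ → LatTerm α)
    (v : α → M) :
    (finsetJoin s hs f).realize v = s.sup' hs fun i => (f i).realize v :=
  eq_of_forall_ge_iff fun x => by simp [finsetJoin, realize_joinListNE_le_iff, Finset.sup'_le_iff]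

end

theorem exists_latticeHom_bool_of_not_le {M : Type*} [DistribLattice M] {a b : M} (h : ¬a ≤ b) :
    ∃ f : LatticeHom M Bool, f a = true ∧ f b = false := by
  classical
  obtain ⟨J, hJ, hbJ, haJ⟩ := DistribLattice.prime_ideal_of_disjoint_filter_ideal
    (F := Order.PFilter.principal a) (I := Order.Ideal.principal b) <|
    Set.disjoint_left.mpr fun x hax hxb => h (le_trans hax (Order.Ideal.mem_principal.mp hxb))
  refine ⟨⟨⟨fun x => decide (x ∉ J), fun x y => ?_⟩, fun x y => ?_⟩, ?_, ?_⟩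
  · simp [Order.Ideal.sup_mem_iff]
  · have hinf : x ⊓ y ∈ J ↔ x ∈ J ∨ y ∈ J :=
      ⟨hJ.mem_or_mem, fun h => h.elim (J.lower inf_le_left) (J.lower inf_le_right)⟩
    simp [hinf]
  · simpa using Set.disjoint_left.mp haJ (Order.PFilter.mem_principal.mpr le_rfl)
  · simpa using hbJ Order.Ideal.mem_principal_self

theorem exists_latticeHom_bool_ne_of_ne {M : Type*} [DistribLattice M] {a b : M} (h : a ≠ b) :
    ∃ f : LatticeHom M Bool, f a ≠ f b := by
  by_contra! hf
  have separates {x y : M} (hf : ∀ f : LatticeHom M Bool, f x = f y) : x ≤ y := by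
    by_contra hxy
    obtain ⟨f, hx, hy⟩ := exists_latticeHom_bool_of_not_le hxy
    simpa [hx, hy] using hf f
  exact h (le_antisymm (separates hf) (separates fun f => (hf f).symm))

theorem dlatValid_of_forall_bool {α : Type} {e : LatEq α}
    (h : ∀ w : α → Bool, e.1.realize w = e.2.realize w) : DLatValid e := by
  intro M _ v
  by_contra hne
  obtain ⟨f, hf⟩ := exists_latticeHom_bool_ne_of_ne hne
  rw [← LatTerm.realize_comp_latticeHom, ← LatTerm.realize_comp_latticeHom] at hf
  exact hf (h _)

theorem realize_leEq_iff {α M : Type} [Lattice M] (s t : LatTerm α) (v : α → M) :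
    (leEq s t).1.realize v = (leEq s t).2.realize v ↔ s.realize v ≤ t.realize v :=
  inf_eq_left

theorem realize_finsetMeet_le_finsetJoin_compl_iff {α : Type} [Fintype α] [DecidableEq α]
    (I : Finset α) (hI : I.Nonempty) (hc : Iᶜ.Nonempty) (u : α → Bool) :
    (finsetMeet I hI LatTerm.var).realize u ≤ (finsetJoin Iᶜ hc LatTerm.var).realize u ↔
      u ≠ fun i => decide (i ∈ I) := by
  have hmeet : I.inf' hI u = true ↔ ∀ i ∈ I, u i = true := by
    simpa only [Bool.le_iff_imp, forall_const] using Finset.le_inf'_iff (a := true) hI u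
  have hjoin : Iᶜ.sup' hc u = false ↔ ∀ i ∉ I, u i = false := by
    simpa only [Bool.le_iff_imp, Bool.false_eq_true, imp_false, Bool.not_eq_true,
      Finset.mem_compl] using Finset.sup'_le_iff (a := false) hc u
  have hind :
      (u = fun i => decide (i ∈ I)) ↔ (∀ i ∈ I, u i = true) ∧ ∀ i ∉ I, u i = false := by
    simp only [funext_iff]
    refine ⟨fun h => ⟨fun i hi => by simp [h i, hi], fun i hi => by simp [h i, hi]⟩,
      fun h i => ?_⟩
    by_cases hi : i ∈ I <;> simp [hi, h.1, h.2]
  rw [realize_finsetMeet, realize_finsetJoin]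
  change I.inf' hI u ≤ Iᶜ.sup' hc u ↔ _
  rw [Ne, hind, ← hmeet, ← hjoin]
  cases I.inf' hI u <;> cases Iᶜ.sup' hc u <;> decide

theorem DLatValid.subst {α β : Type} {e : LatEq α} (he : DLatValid e) (σ : α → LatTerm β) :
    DLatValid (e.1.subst σ, e.2.subst σ) := by
  intro M _ v
  simp only [LatTerm.realize_subst]
  exact he M _

theorem DLatValid.of_subst_var_val {n : ℕ} {e : LatEq (Fin n)}
    (he : DLatValid (e.1.subst fun i => LatTerm.var i.val, e.2.subst fun i => LatTerm.var i.val)) :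
    DLatValid e := by
  refine dlatValid_of_forall_bool fun w => ?_
  have hw := he Bool (Function.extend Fin.val w fun _ => false)
  simp only [LatTerm.realize_subst, LatTerm.realize, Fin.val_injective.extend_apply] at hw
  exact hw

theorem not_dlatValid_of_mem_deltaDL {m : ℕ} {d : LatEq (Fin (m + 2))} (hd : d ∈ DeltaDL m) :
    ¬DLatValid d := by
  obtain ⟨I, hI, -, hc, rfl⟩ := hd
  intro h
  have := h Bool fun i => decide (i ∈ I)
  rw [realize_leEq_iff, realize_finsetMeet_le_finsetJoin_compl_iff] at this
  exact this rfl

theorem not_dlatValid_of_dlatAdm {n : ℕ} {e : LatEq (Fin n)} {Δ : Set (LatEq (Fin n))}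
    (hΔ : ∀ d ∈ Δ, ¬DLatValid d) (h : DLatAdm {e} Δ) : ¬DLatValid e := fun he =>
  have ⟨d, hd, hσd⟩ := h _ fun _ he' => he' ▸ he.subst _
  hΔ d hd hσd.of_subst_var_val

theorem dlatAdm_deltaDL_of_not_dlatValid {m : ℕ} {e : LatEq (Fin (m + 2))} (he : ¬DLatValid e) :
    DLatAdm {e} (DeltaDL m) := by
  obtain ⟨w, hw⟩ : ∃ w : Fin (m + 2) → Bool, e.1.realize w ≠ e.2.realize w := by
    by_contra! h
    exact he (dlatValid_of_forall_bool h)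
  set I := Finset.univ.filter (w · = true)
  have hwI : w = fun i => decide (i ∈ I) := by funext i; simp [I]
  have hI : I.Nonempty := by
    obtain ⟨i, hi⟩ := LatTerm.exists_ne_of_realize_ne hw false
    exact ⟨i, by simpa [I] using hi⟩
  have hc : Iᶜ.Nonempty := by
    obtain ⟨i, hi⟩ := LatTerm.exists_ne_of_realize_ne hw true
    exact ⟨i, by simpa [I] using hi⟩
  intro σ hσ
  refine ⟨_, ⟨I, hI, fun h => by simp [h] at hc, hc, rfl⟩,
    dlatValid_of_forall_bool fun u => ?_⟩
  have hσe := hσ e rfl Bool u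
  rw [LatTerm.realize_subst, LatTerm.realize_subst] at hσe ⊢
  rw [realize_leEq_iff, realize_finsetMeet_le_finsetJoin_compl_iff, ← hwI]
  rintro hu
  exact hw (hu ▸ hσe)

theorem stmt10 (m : ℕ) : DLatRefuting (DeltaDL m) := fun _ =>
  ⟨dlatAdm_deltaDL_of_not_dlatValid,
    not_dlatValid_of_dlatAdm fun _ => not_dlatValid_of_mem_deltaDL⟩
end
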